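/- arXiv:2301.02750 — 3 statements merged into one kernel-verified Lean document; each statement's English description precedes it below -/
import Mathlib

section
/- Let S^D be the sphere of radius C^{-1/2} in R^{D+1} with curvature C>0, p in S^D, and let h'_1,...,h'_{K'} be an orthogonal basis of H^⊥ ⊆ T_p S^D with <h'_i, h'_j> = C δ_{ij}. Then for any x in S^D, the minimum geodesic distance from x to S^D_H equals C^{-1/2} · arccos( sqrt(1 - Σ_{k=1}^{K'} <x, h'_k>^2) ). -/
open Matrix BigOperators

lemma arccos_anti {a b : ℝ} (h : a ≤ b) : Real.arccos b ≤ Real.arccos a := by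
  rw [Real.arccos_eq_pi_div_two_sub_arcsin, Real.arccos_eq_pi_div_two_sub_arcsin]
  exact sub_le_sub_left (Real.monotone_arcsin h) _

/-- On the sphere of radius C^{-1/2} (curvature C > 0), with h'_1,…,h'_{K'}
an orthogonal basis of H^⊥ ⊆ T_p S^D (⟨h'_i,h'_j⟩ = C δ_{ij}), the minimum geodesic
distance from x ∈ S^D to S^D_H = {y ∈ S^D : ⟨y,h'_k⟩ = 0 ∀k} equals
C^{-1/2}·arccos(√(1 - Σ_k ⟨x,h'_k⟩²)). -/
theorem spherical_projection_distance
    (D K' : ℕ) (C : ℝ) (hC : 0 < C)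
    (p : Fin (D + 1) → ℝ) (hp : p ⬝ᵥ p = 1 / C)
    (h' : Fin K' → (Fin (D + 1) → ℝ))
    (htan : ∀ k, h' k ⬝ᵥ p = 0)
    (horth : ∀ i j, h' i ⬝ᵥ h' j = if i = j then C else 0)
    (x : Fin (D + 1) → ℝ) (hx : x ⬝ᵥ x = 1 / C) :
    sInf {r : ℝ | ∃ y : Fin (D + 1) → ℝ,
        (y ⬝ᵥ y = 1 / C ∧ ∀ k, y ⬝ᵥ h' k = 0) ∧
        r = (Real.sqrt C)⁻¹ * Real.arccos (C * (x ⬝ᵥ y))}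
    = (Real.sqrt C)⁻¹ *
        Real.arccos (Real.sqrt (1 - ∑ k, (x ⬝ᵥ h' k) ^ 2)) := by
  set a : Fin K' → ℝ := fun k => x ⬝ᵥ h' k with ha
  set s : ℝ := ∑ k, (a k) ^ 2 with hs
  set u : Fin (D + 1) → ℝ := fun i => x i - ∑ k, (a k / C) * h' k i with hu
  -- linearity of dot product in u
  have hu_dot : ∀ v : Fin (D + 1) → ℝ,
      u ⬝ᵥ v = x ⬝ᵥ v - ∑ k, (a k / C) * (h' k ⬝ᵥ v) := by
    intro v
    simp only [dotProduct, hu, sub_mul, Finset.sum_mul, Finset.sum_sub_distrib]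
    rw [Finset.sum_comm]
    congr 1
    refine Finset.sum_congr rfl fun k _ => ?_
    rw [Finset.mul_sum]
    exact Finset.sum_congr rfl fun i _ => by ring
  have hu_h : ∀ j, u ⬝ᵥ h' j = 0 := by
    intro j
    rw [hu_dot]
    have : ∀ k, (a k / C) * (h' k ⬝ᵥ h' j) = if k = j then a j else 0 := by
      intro k
      rw [horth]
      by_cases h : k = j
      · subst h; rw [if_pos rfl, if_pos rfl, div_mul_cancel₀ _ hC.ne']
      · simp [h]
    rw [Finset.sum_congr rfl fun k _ => this k]
    simp only [Finset.sum_ite_eq', Finset.mem_univ, if_true, ha, sub_self]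
  have hxu : x ⬝ᵥ u = 1 / C - s / C := by
    rw [dotProduct_comm, hu_dot, hx]
    congr 1
    rw [hs, Finset.sum_div]
    refine Finset.sum_congr rfl fun k _ => ?_
    rw [dotProduct_comm (h' k) x]
    show a k / C * a k = a k ^ 2 / C
    ring
  have huu : u ⬝ᵥ u = (1 - s) / C := by
    rw [hu_dot u, hxu]
    have : ∀ k, (a k / C) * (h' k ⬝ᵥ u) = 0 := fun k => by
      rw [dotProduct_comm, hu_h]; ring
    simp only [this, Finset.sum_const_zero, sub_zero, sub_div]
  have hs1 : s ≤ 1 := by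
    have h0 : (0:ℝ) ≤ u ⬝ᵥ u := by
      simp only [dotProduct]
      exact Finset.sum_nonneg fun i _ => mul_self_nonneg _
    rw [huu] at h0
    have h1 : 0 ≤ (1 - s) / C * C := mul_nonneg h0 hC.le
    rw [div_mul_cancel₀ _ (ne_of_gt hC)] at h1
    linarith
  have hssub : 0 ≤ 1 - s := by linarith
  -- for any y in the set, x ⬝ᵥ y = u ⬝ᵥ y
  have hxy_eq : ∀ y : Fin (D + 1) → ℝ, (∀ k, y ⬝ᵥ h' k = 0) → x ⬝ᵥ y = u ⬝ᵥ y := by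
    intro y hy
    rw [hu_dot]
    have : ∀ k, (a k / C) * (h' k ⬝ᵥ y) = 0 := fun k => by
      rw [dotProduct_comm, hy]; ring
    simp [this]
  have hsqC : (0:ℝ) < Real.sqrt C := Real.sqrt_pos.mpr hC
  -- lower bound
  have hlb : ∀ r ∈ {r : ℝ | ∃ y : Fin (D + 1) → ℝ,
        (y ⬝ᵥ y = 1 / C ∧ ∀ k, y ⬝ᵥ h' k = 0) ∧
        r = (Real.sqrt C)⁻¹ * Real.arccos (C * (x ⬝ᵥ y))},
      (Real.sqrt C)⁻¹ * Real.arccos (Real.sqrt (1 - s)) ≤ r := by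
    rintro r ⟨y, ⟨hyy, hyh⟩, rfl⟩
    have hcs : (u ⬝ᵥ y) ^ 2 ≤ (u ⬝ᵥ u) * (y ⬝ᵥ y) := by
      have := Finset.sum_mul_sq_le_sq_mul_sq Finset.univ u y
      calc (u ⬝ᵥ y) ^ 2 = (∑ i, u i * y i) ^ 2 := rfl
        _ ≤ (∑ i, u i ^ 2) * ∑ i, y i ^ 2 := this
        _ = (u ⬝ᵥ u) * (y ⬝ᵥ y) := by
            simp only [dotProduct, sq]
    rw [huu, hyy] at hcs
    have hle : C * (x ⬝ᵥ y) ≤ Real.sqrt (1 - s) := by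
      rw [hxy_eq y hyh]
      have h2 : (C * (u ⬝ᵥ y)) ^ 2 ≤ 1 - s := by
        have : (C * (u ⬝ᵥ y)) ^ 2 = C ^ 2 * (u ⬝ᵥ y) ^ 2 := by ring
        rw [this]
        calc C ^ 2 * (u ⬝ᵥ y) ^ 2 ≤ C ^ 2 * ((1 - s) / C * (1 / C)) :=
              mul_le_mul_of_nonneg_left hcs (sq_nonneg C)
          _ = 1 - s := by field_simp
      calc C * (u ⬝ᵥ y) ≤ |C * (u ⬝ᵥ y)| := le_abs_self _
        _ = Real.sqrt ((C * (u ⬝ᵥ y)) ^ 2) := (Real.sqrt_sq_eq_abs _).symm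
        _ ≤ Real.sqrt (1 - s) := Real.sqrt_le_sqrt h2
    exact mul_le_mul_of_nonneg_left (arccos_anti hle) (le_of_lt (inv_pos.mpr hsqC))
  -- membership
  have hmem : (Real.sqrt C)⁻¹ * Real.arccos (Real.sqrt (1 - s)) ∈
      {r : ℝ | ∃ y : Fin (D + 1) → ℝ,
        (y ⬝ᵥ y = 1 / C ∧ ∀ k, y ⬝ᵥ h' k = 0) ∧
        r = (Real.sqrt C)⁻¹ * Real.arccos (C * (x ⬝ᵥ y))} := by
    rcases eq_or_lt_of_le hssub with heq | hlt
    · -- s = 1 : take y = p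
      refine ⟨p, ⟨hp, fun k => by rw [dotProduct_comm]; exact htan k⟩, ?_⟩
      have hu0 : u = 0 := by
        rw [← dotProduct_self_eq_zero (v := u), huu, ← heq]
        ring
      have hxp : x ⬝ᵥ p = 0 := by
        have := hu_dot p
        rw [hu0] at this
        simp only [zero_dotProduct] at this
        simp only [htan, mul_zero, Finset.sum_const_zero, sub_zero] at this
        linarith
      rw [hxp, mul_zero, ← heq, Real.sqrt_zero]
    · -- s < 1 : take y = u / √(1-s)
      set t : ℝ := Real.sqrt (1 - s) with ht
      have ht0 : 0 < t := Real.sqrt_pos.mpr hlt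
      have ht2 : t ^ 2 = 1 - s := Real.sq_sqrt (le_of_lt hlt)
      refine ⟨fun i => u i / t, ⟨?_, fun k => ?_⟩, ?_⟩
      · have : (fun i => u i / t) ⬝ᵥ (fun i => u i / t) = (u ⬝ᵥ u) / t ^ 2 := by
          simp only [dotProduct, Finset.sum_div]
          exact Finset.sum_congr rfl fun i _ => by ring
        rw [this, huu, ht2]
        field_simp
      · have : (fun i => u i / t) ⬝ᵥ h' k = (u ⬝ᵥ h' k) / t := by
          simp only [dotProduct, Finset.sum_div]
          exact Finset.sum_congr rfl fun i _ => by ring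
        rw [this, hu_h]; ring
      · have h1 : x ⬝ᵥ (fun i => u i / t) = t / C := by
          have h2 : x ⬝ᵥ (fun i => u i / t) = (x ⬝ᵥ u) / t := by
            simp only [dotProduct, Finset.sum_div]
            exact Finset.sum_congr rfl fun i _ => by ring
          rw [h2, hxu]
          rw [eq_div_iff (ne_of_gt hC)]
          field_simp
          nlinarith [ht2]
        rw [h1]
        congr 2
        field_simp
  exact le_antisymm (csInf_le ⟨_, hlb⟩ hmem) (le_csInf ⟨_, hmem⟩ hlb)
end

section
/- With the notation of spherical affine subspaces, if h_1,...,h_K is an orthogonal basis of H ⊆ T_p S^D with <h_i,h_j> = C δ_{ij}, then for any x in S^D, min_{y in S^D_H} d(x,y) = C^{-1/2} arccos( sqrt( C^2 <x,p>^2 + Σ_{k=1}^K <x,h_k>^2 ) ). -/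
open Matrix BigOperators

lemma my_sum_dotProduct {n : ℕ} {ι : Type*} (s : Finset ι) (f : ι → Fin n → ℝ)
    (v : Fin n → ℝ) : (∑ i ∈ s, f i) ⬝ᵥ v = ∑ i ∈ s, f i ⬝ᵥ v := by
  simp only [dotProduct, Finset.sum_apply, Finset.sum_mul]
  rw [Finset.sum_comm]

lemma my_arccos_le_arccos {a b : ℝ} (hab : a ≤ b) : Real.arccos b ≤ Real.arccos a := by
  unfold Real.arccos
  exact sub_le_sub_left (Real.monotone_arcsin hab) _

lemma my_cs {n : ℕ} (u v : Fin n → ℝ) : u ⬝ᵥ v ≤ Real.sqrt (u ⬝ᵥ u) * Real.sqrt (v ⬝ᵥ v) := by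
  have := Real.sum_mul_le_sqrt_mul_sqrt (Finset.univ : Finset (Fin n)) u v
  simpa [dotProduct, sq] using this

/-- With h_1,…,h_K an orthogonal basis of H ⊆ T_p S^D (⟨h_i,h_j⟩ = C δ_{ij})
on the sphere of curvature C > 0, for any x ∈ S^D,
min_{y ∈ S^D_H} d(x,y) = C^{-1/2} arccos(√(C²⟨x,p⟩² + Σ_k ⟨x,h_k⟩²)),
where S^D_H = S^D ∩ (span{p} + H). -/
theorem spherical_projection_distance_parallel
    (D K : ℕ) (C : ℝ) (hC : 0 < C)
    (p : Fin (D + 1) → ℝ) (hp : p ⬝ᵥ p = 1 / C)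
    (h : Fin K → (Fin (D + 1) → ℝ))
    (htan : ∀ k, h k ⬝ᵥ p = 0)
    (horth : ∀ i j, h i ⬝ᵥ h j = if i = j then C else 0)
    (x : Fin (D + 1) → ℝ) (hx : x ⬝ᵥ x = 1 / C) :
    sInf {r : ℝ | ∃ y : Fin (D + 1) → ℝ,
        (y ⬝ᵥ y = 1 / C ∧
          y ∈ Submodule.span ℝ (insert p (Set.range h))) ∧
        r = (Real.sqrt C)⁻¹ * Real.arccos (C * (x ⬝ᵥ y))}
    = (Real.sqrt C)⁻¹ *
        Real.arccos (Real.sqrt (C ^ 2 * (x ⬝ᵥ p) ^ 2 + ∑ k, (x ⬝ᵥ h k) ^ 2)) := by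
  have hC0 : C ≠ 0 := ne_of_gt hC
  set c : ℝ := (Real.sqrt C)⁻¹ with hc
  have hc0 : 0 ≤ c := inv_nonneg.2 (Real.sqrt_nonneg C)
  set s : ℝ := C ^ 2 * (x ⬝ᵥ p) ^ 2 + ∑ k, (x ⬝ᵥ h k) ^ 2 with hsdef
  have hsum0 : (0:ℝ) ≤ ∑ k, (x ⬝ᵥ h k) ^ 2 := Finset.sum_nonneg fun _ _ => sq_nonneg _
  have hs0 : 0 ≤ s := by positivity
  -- the projection of x onto the span
  set P : Fin (D + 1) → ℝ :=
    (C * (x ⬝ᵥ p)) • p + ∑ k, (C⁻¹ * (x ⬝ᵥ h k)) • h k with hPdef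
  have hPd : ∀ z, P ⬝ᵥ z
      = (C * (x ⬝ᵥ p)) * (p ⬝ᵥ z) + ∑ k, (C⁻¹ * (x ⬝ᵥ h k)) * (h k ⬝ᵥ z) := by
    intro z
    rw [hPdef, add_dotProduct, smul_dotProduct, my_sum_dotProduct]
    simp [smul_dotProduct, smul_eq_mul]
  have hPp : P ⬝ᵥ p = x ⬝ᵥ p := by
    rw [hPd]
    simp only [htan, mul_zero, Finset.sum_const_zero, add_zero, hp]
    field_simp
  have hPh : ∀ j, P ⬝ᵥ h j = x ⬝ᵥ h j := by
    intro j
    rw [hPd, dotProduct_comm p (h j), htan, mul_zero, zero_add,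
      Finset.sum_eq_single j]
    · rw [horth]
      rw [if_pos rfl]
      field_simp
    · intro k _ hk
      rw [horth]
      simp [hk]
    · simp
  have hspan : P ∈ Submodule.span ℝ (insert p (Set.range h)) := by
    apply Submodule.add_mem
    · exact Submodule.smul_mem _ _ (Submodule.subset_span (Set.mem_insert _ _))
    · exact Submodule.sum_mem _ fun k _ => Submodule.smul_mem _ _
        (Submodule.subset_span (Set.mem_insert_of_mem _ (Set.mem_range_self k)))
  -- x and P have the same inner product with every element of the span
  have horthspan : ∀ y ∈ Submodule.span ℝ (insert p (Set.range h)), x ⬝ᵥ y = P ⬝ᵥ y := by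
    intro y hy
    induction hy using Submodule.span_induction with
    | mem z hz =>
      rcases hz with rfl | ⟨k, rfl⟩
      · exact hPp.symm
      · exact (hPh k).symm
    | zero => simp
    | add a b _ _ ha hb => rw [dotProduct_add, dotProduct_add, ha, hb]
    | smul r a _ ha => rw [dotProduct_smul, dotProduct_smul, ha]
  have hxP : x ⬝ᵥ P = s / C := by
    rw [dotProduct_comm, hPd, dotProduct_comm p x]
    have e1 : ∀ k, C⁻¹ * (x ⬝ᵥ h k) * (h k ⬝ᵥ x) = (x ⬝ᵥ h k) ^ 2 / C := by
      intro k
      rw [dotProduct_comm (h k) x, sq, div_eq_mul_inv]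
      ring
    rw [Finset.sum_congr rfl fun k _ => e1 k, ← Finset.sum_div, hsdef]
    field_simp
  have hPP : P ⬝ᵥ P = s / C := by rw [← horthspan P hspan, hxP]
  have hsq : Real.sqrt (s / C) * Real.sqrt (1 / C) = Real.sqrt s / C := by
    rw [← Real.sqrt_mul (by positivity)]
    rw [show s / C * (1 / C) = s / C ^ 2 by ring, Real.sqrt_div hs0,
      Real.sqrt_sq hC.le]
  have hkey : ∀ y : Fin (D + 1) → ℝ, y ⬝ᵥ y = 1 / C →
      y ∈ Submodule.span ℝ (insert p (Set.range h)) → C * (x ⬝ᵥ y) ≤ Real.sqrt s := by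
    intro y hyy hysp
    rw [horthspan y hysp]
    have hcs := my_cs P y
    rw [hPP, hyy, hsq] at hcs
    calc C * (P ⬝ᵥ y) ≤ C * (Real.sqrt s / C) := mul_le_mul_of_nonneg_left hcs hC.le
      _ = Real.sqrt s := by field_simp
  have hlow : ∀ y : Fin (D + 1) → ℝ, y ⬝ᵥ y = 1 / C → -1 ≤ C * (x ⬝ᵥ y) := by
    intro y hyy
    have hcs := my_cs (-x) y
    have hnn : (-x) ⬝ᵥ (-x) = 1 / C := by
      rw [neg_dotProduct, dotProduct_neg, neg_neg, hx]
    rw [hnn, hyy, neg_dotProduct,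
      Real.mul_self_sqrt (by positivity : (0:ℝ) ≤ 1 / C)] at hcs
    have h2 : C * -(x ⬝ᵥ y) ≤ C * (1 / C) := mul_le_mul_of_nonneg_left hcs hC.le
    rw [mul_one_div, div_self hC0] at h2
    linarith
  have hmem : (c * Real.arccos (Real.sqrt s)) ∈ {r : ℝ | ∃ y : Fin (D + 1) → ℝ,
      (y ⬝ᵥ y = 1 / C ∧ y ∈ Submodule.span ℝ (insert p (Set.range h))) ∧
      r = (Real.sqrt C)⁻¹ * Real.arccos (C * (x ⬝ᵥ y))} := by
    rcases eq_or_lt_of_le hs0 with hseq | hspos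
    · refine ⟨p, ⟨hp, Submodule.subset_span (Set.mem_insert _ _)⟩, ?_⟩
      have h1 : C ^ 2 * (x ⬝ᵥ p) ^ 2 = 0 :=
        le_antisymm (by nlinarith) (by positivity)
      have hxp0 : x ⬝ᵥ p = 0 := by
        rcases mul_eq_zero.mp h1 with hh | hh
        · exact absurd hh (by positivity)
        · exact (pow_eq_zero_iff two_ne_zero).mp hh
      rw [hxp0, mul_zero, ← hseq, Real.sqrt_zero, hc]
    · have hsnz : Real.sqrt s ≠ 0 := by positivity
      have hsne : s ≠ 0 := ne_of_gt hspos
      refine ⟨(Real.sqrt s)⁻¹ • P, ⟨?_, Submodule.smul_mem _ _ hspan⟩, ?_⟩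
      · rw [smul_dotProduct, dotProduct_smul, hPP, smul_eq_mul, smul_eq_mul,
          ← mul_assoc, ← mul_inv, Real.mul_self_sqrt hs0]
        rw [inv_mul_eq_div, div_right_comm, div_self hsne]
      · rw [dotProduct_smul, smul_eq_mul, hxP, hc]
        congr 1
        rw [← mul_assoc]
        have hCs : C * (s / C) = s := by field_simp
        rw [show C * (Real.sqrt s)⁻¹ * (s / C) = (Real.sqrt s)⁻¹ * (C * (s / C)) from by
            ring, hCs, inv_mul_eq_div, Real.div_sqrt]
  apply le_antisymm
  · exact csInf_le ⟨0, fun r hr => by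
      obtain ⟨y, _, rfl⟩ := hr
      exact mul_nonneg hc0 (Real.arccos_nonneg _)⟩ hmem
  · refine le_csInf ⟨_, hmem⟩ ?_
    rintro r ⟨y, ⟨hyy, hysp⟩, rfl⟩
    exact mul_le_mul_of_nonneg_left (my_arccos_le_arccos (hkey y hyy hysp)) hc0
end

section
/- If A is a real (D+1)×(D+1) matrix satisfying A = J_D A^T J_D (i.e., A is J_D-self-adjoint), then every J_D-eigenvalue of A is real; that is, if A J_D v = sgn([v*,v]) λ v for some nonzero v in C^{D+1} with [v*,v] ≠ 0, then λ is real. -/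
open Matrix BigOperators

/-- The Lorentz signature matrix J_D = diag(-1, 1, …, 1) over ℂ. -/
noncomputable def JmatC (D : ℕ) : Matrix (Fin (D + 1)) (Fin (D + 1)) ℂ :=
  Matrix.diagonal (fun i => if i = 0 then (-1 : ℂ) else 1)

/-- The Lorentz signature matrix J_D = diag(-1, 1, …, 1) over ℝ. -/
noncomputable def JmatR (D : ℕ) : Matrix (Fin (D + 1)) (Fin (D + 1)) ℝ :=
  Matrix.diagonal (fun i => if i = 0 then (-1 : ℝ) else 1)

/-- Sign of a complex number (used on reals embedded in ℂ). -/
noncomputable def csgn (z : ℂ) : ℂ :=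
  if 0 < z.re then 1 else if z.re < 0 then -1 else 0

/-! The eigenvalue equation is an ordinary eigenvalue equation for `A J`, and `J`-self-adjointness
of `A` together with `J² = 1` makes `A J` symmetric, so its eigenvalue `sgn([v*,v]) λ` is real.
Since `J` is Hermitian, `[v*,v]` is real and nonzero, so its sign is `±1` and `λ` is real. -/

namespace Matrix

theorem isSymm_mul_of_eq_mul_transpose_mul {n R : Type*} [Fintype n] [DecidableEq n]
    [CommSemiring R] {A J : Matrix n n R} (hJ : J.IsSymm) (hJJ : J * J = 1) (hA : A = J * Aᵀ * J) :
    (A * J).IsSymm := by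
  have hAJ : A * J = J * Aᵀ := by
    conv_lhs => rw [hA]
    rw [Matrix.mul_assoc, Matrix.mul_assoc, hJJ, Matrix.mul_one]
  rw [IsSymm, transpose_mul, hJ.eq, hAJ]

open scoped ComplexOrder in
theorem IsHermitian.im_eq_zero_of_mulVec_eq_smul {n 𝕜 : Type*} [Fintype n] [RCLike 𝕜]
    {M : Matrix n n 𝕜} (hM : M.IsHermitian) {v : n → 𝕜} (hv : v ≠ 0) {μ : 𝕜}
    (h : M *ᵥ v = μ • v) : RCLike.im μ = 0 := by
  have hvv : 0 < star v ⬝ᵥ v := dotProduct_star_self_pos_iff.mpr hv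
  have hquad := hM.im_star_dotProduct_mulVec_self v
  rw [h, dotProduct_smul, smul_eq_mul, RCLike.mul_im, (RCLike.pos_iff.mp hvv).2, mul_zero,
    zero_add] at hquad
  exact (mul_eq_zero.mp hquad).resolve_right (RCLike.pos_iff.mp hvv).1.ne'

end Matrix

theorem csgn_eq_one_or_eq_neg_one {z : ℂ} (hz : z.re ≠ 0) : csgn z = 1 ∨ csgn z = -1 := by
  unfold csgn
  rcases hz.lt_or_gt with h | h
  · simp [h, h.not_gt]
  · simp [h]

theorem JmatR_mul_self (D : ℕ) : JmatR D * JmatR D = 1 := by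
  rw [JmatR, diagonal_mul_diagonal, ← diagonal_one]
  congr 1
  ext i
  split_ifs <;> norm_num

theorem JmatC_eq_map (D : ℕ) : JmatC D = (JmatR D).map Complex.ofReal := by
  simp [JmatC, JmatR, diagonal_map, apply_ite Complex.ofReal]

theorem isHermitian_map_ofReal_iff {n : Type*} {M : Matrix n n ℝ} :
    (M.map Complex.ofReal).IsHermitian ↔ M.IsSymm := by
  rw [isHermitian_map_iff (fun x => by simp) Complex.ofReal_injective, isHermitian_iff_isSymm]

theorem isSymm_JmatR (D : ℕ) : (JmatR D).IsSymm :=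
  diagonal_transpose _

theorem isHermitian_JmatC (D : ℕ) : (JmatC D).IsHermitian :=
  JmatC_eq_map D ▸ isHermitian_map_ofReal_iff.mpr (isSymm_JmatR D)

theorem j_selfadjoint_real_j_eigenvalues_general
    (D : ℕ) (A : Matrix (Fin (D + 1)) (Fin (D + 1)) ℝ)
    (hA : A = JmatR D * Aᵀ * JmatR D)
    (v : Fin (D + 1) → ℂ) (lam : ℂ)
    (hnull : star v ⬝ᵥ (JmatC D *ᵥ v) ≠ 0)
    (heig : (A.map Complex.ofReal * JmatC D) *ᵥ v =
      (csgn (star v ⬝ᵥ (JmatC D *ᵥ v)) * lam) • v) :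
    lam.im = 0 := by
  have hM : (A.map Complex.ofReal * JmatC D).IsHermitian := by
    rw [JmatC_eq_map]
    convert isHermitian_map_ofReal_iff.mpr
      (isSymm_mul_of_eq_mul_transpose_mul (isSymm_JmatR D) (JmatR_mul_self D) hA) using 1
    exact (Matrix.map_mul (f := Complex.ofRealHom)).symm
  have hv : v ≠ 0 := by
    rintro rfl
    simp at hnull
  have hform_re : (star v ⬝ᵥ (JmatC D *ᵥ v)).re ≠ 0 := fun hre =>
    hnull (Complex.ext hre ((isHermitian_JmatC D).im_star_dotProduct_mulVec_self v))
  have hμ := hM.im_eq_zero_of_mulVec_eq_smul hv heig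
  rcases csgn_eq_one_or_eq_neg_one hform_re with h | h <;> simpa [h] using hμ

/-- If A is real and J_D-self-adjoint (A = J_D Aᵀ J_D), then every
J_D-eigenvalue of A is real: if A J_D v = sgn([v*,v]) λ v with [v*,v] ≠ 0, then λ ∈ ℝ. -/
theorem j_selfadjoint_real_j_eigenvalues
    (D : ℕ) (A : Matrix (Fin (D + 1)) (Fin (D + 1)) ℝ)
    (hA : A = JmatR D * Aᵀ * JmatR D)
    (v : Fin (D + 1) → ℂ) (hv : v ≠ 0) (lam : ℂ)
    (hnull : star v ⬝ᵥ (JmatC D *ᵥ v) ≠ 0)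
    (heig : (A.map Complex.ofReal * JmatC D) *ᵥ v =
      (csgn (star v ⬝ᵥ (JmatC D *ᵥ v)) * lam) • v) :
    lam.im = 0 :=
  j_selfadjoint_real_j_eigenvalues_general D A hA v lam hnull heig
end
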